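/- Let K be a field, F ∈ K[x]^{n×n} nonsingular, partitioned as F = [F_U; F_D] with F_U the top k rows (1 ≤ k < n). Then F_U and F_D both have full row rank, and if U ∈ K[x]^{n×n} is unimodular with F·U = [[G_1, 0], [*, G_2]] block lower triangular (G_1 of size k×k), then G_1 is nonsingular and G_1 is a column basis of F_U. -/

import Mathlib

open Polynomial Matrix

/-! Since `U` is unimodular, `F * U` is nonsingular and its top rows `[G₁ 0]` span the same column
module as `F_U`. The zero block gives `det (F * U) = det G₁ * det G₂`, so `G₁` is nonsingular, and
it shows that `[G₁ 0]` and `G₁` have the same column module. -/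

/-- `T` is a column basis of `F`. -/
def IsColumnBasis {K : Type*} [Field K] {m n r : ℕ}
    (F : Matrix (Fin m) (Fin n) K[X]) (T : Matrix (Fin m) (Fin r) K[X]) : Prop :=
  LinearIndependent K[X] Tᵀ ∧
  (∀ q : Fin r → K[X], ∃ p : Fin n → K[X], T.mulVec q = F.mulVec p) ∧
  (∀ p : Fin n → K[X], ∃ q : Fin r → K[X], F.mulVec p = T.mulVec q)

theorem isColumnBasis_iff {K : Type*} [Field K] {m n r : ℕ}
    {F : Matrix (Fin m) (Fin n) K[X]} {T : Matrix (Fin m) (Fin r) K[X]} :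
    IsColumnBasis F T ↔ LinearIndependent K[X] Tᵀ ∧
      LinearMap.range T.mulVecLin = LinearMap.range F.mulVecLin := by
  simp [IsColumnBasis, le_antisymm_iff, SetLike.le_def, eq_comm]

namespace Matrix

variable {R : Type*} [CommRing R]

theorem range_mulVecLin_mul_of_isUnit_det {m n : Type*} [Fintype n] [DecidableEq n]
    (A : Matrix m n R) {U : Matrix n n R} (hU : IsUnit U.det) :
    LinearMap.range (A * U).mulVecLin = LinearMap.range A.mulVecLin := by
  have hsurj : LinearMap.range U.mulVecLin = ⊤ :=
    LinearMap.range_eq_top.mpr (mulVec_surjective_iff_isUnit.mpr ((isUnit_iff_isUnit_det U).mpr hU))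
  rw [mulVecLin_mul, LinearMap.range_comp_of_range_eq_top _ hsurj]

theorem mulVec_eq_mulVec_castAdd_of_submatrix_natAdd_eq_zero {m : Type*} {k l : ℕ}
    {N : Matrix m (Fin (k + l)) R} (h : N.submatrix id (Fin.natAdd k) = 0)
    (w : Fin (k + l) → R) :
    N *ᵥ w = N.submatrix id (Fin.castAdd l) *ᵥ (w ∘ Fin.castAdd l) := by
  ext i
  have hi (j : Fin l) : N i (Fin.natAdd k j) = 0 := congrFun (congrFun h i) j
  simp [mulVec, dotProduct, Fin.sum_univ_add, hi]

theorem range_mulVecLin_eq_of_submatrix_natAdd_eq_zero {m : Type*} {k l : ℕ}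
    {N : Matrix m (Fin (k + l)) R} (h : N.submatrix id (Fin.natAdd k) = 0) :
    LinearMap.range N.mulVecLin = LinearMap.range (N.submatrix id (Fin.castAdd l)).mulVecLin := by
  ext v
  simp only [LinearMap.mem_range, mulVecLin_apply,
    mulVec_eq_mulVec_castAdd_of_submatrix_natAdd_eq_zero h]
  constructor
  · rintro ⟨w, rfl⟩
    exact ⟨_, rfl⟩
  · rintro ⟨q, rfl⟩
    exact ⟨Fin.append q 0, congrArg _ (funext (Fin.append_left q 0))⟩

theorem det_eq_det_mul_det_of_submatrix_castAdd_natAdd_eq_zero {k l : ℕ}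
    {M : Matrix (Fin (k + l)) (Fin (k + l)) R}
    (h : M.submatrix (Fin.castAdd l) (Fin.natAdd k) = 0) :
    M.det = (M.submatrix (Fin.castAdd l) (Fin.castAdd l)).det *
      (M.submatrix (Fin.natAdd k) (Fin.natAdd k)).det := by
  have h₁₂ : (M.submatrix finSumFinEquiv finSumFinEquiv).toBlocks₁₂ = 0 := h
  rw [← det_submatrix_equiv_self finSumFinEquiv M,
    ← fromBlocks_toBlocks (M.submatrix finSumFinEquiv finSumFinEquiv), h₁₂]
  exact det_fromBlocks_zero₁₂ _ _ _

end Matrix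

theorem top_block_nonsingular_column_basis_general
    {K : Type*} [Field K] {k l : ℕ}
    (F : Matrix (Fin (k + l)) (Fin (k + l)) K[X]) (hF : F.det ≠ 0) :
    LinearIndependent K[X] (fun i : Fin k => F (Fin.castAdd l i)) ∧
    LinearIndependent K[X] (fun i : Fin l => F (Fin.natAdd k i)) ∧
    ∀ U : Matrix (Fin (k + l)) (Fin (k + l)) K[X],
      (∃ c : K, c ≠ 0 ∧ U.det = Polynomial.C c) →
      (F * U).submatrix (Fin.castAdd l) (Fin.natAdd k) = 0 →
      ((F * U).submatrix (Fin.castAdd l) (Fin.castAdd l)).det ≠ 0 ∧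
      IsColumnBasis (F.submatrix (Fin.castAdd l) id)
        ((F * U).submatrix (Fin.castAdd l) (Fin.castAdd l)) := by
  have hrows := linearIndependent_rows_of_det_ne_zero hF
  refine ⟨hrows.comp _ (Fin.castAdd_injective k l), hrows.comp _ (Fin.natAdd_injective l k), ?_⟩
  rintro U ⟨c, hc, hUc⟩ hzero
  have hU : IsUnit U.det := hUc ▸ isUnit_C.mpr hc.isUnit
  have hG₁ : ((F * U).submatrix (Fin.castAdd l) (Fin.castAdd l)).det ≠ 0 := by
    have hFU := mul_ne_zero hF hU.ne_zero
    rw [← det_mul, det_eq_det_mul_det_of_submatrix_castAdd_natAdd_eq_zero hzero] at hFU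
    exact left_ne_zero_of_mul hFU
  refine ⟨hG₁, isColumnBasis_iff.mpr ⟨linearIndependent_cols_of_det_ne_zero hG₁, ?_⟩⟩
  have hsub : (F * U).submatrix (Fin.castAdd l) id = F.submatrix (Fin.castAdd l) id * U := by
    simpa using submatrix_mul F U (Fin.castAdd l) id id Function.bijective_id
  rw [← range_mulVecLin_mul_of_isUnit_det _ hU, ← hsub,
    range_mulVecLin_eq_of_submatrix_natAdd_eq_zero hzero]
  rfl

/-- Let `F` be nonsingular of size `(k+l) × (k+l)` with
`k, l ≥ 1`, partitioned as `F = [F_U; F_D]` with `F_U` the top `k` rows.  Then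
`F_U` and `F_D` have full row rank, and for any unimodular `U` such that
`F * U = [[G₁, 0], [*, G₂]]` is block lower triangular (`G₁` of size `k × k`),
the block `G₁` is nonsingular and is a column basis of `F_U`. -/
theorem top_block_nonsingular_column_basis
    {K : Type*} [Field K] {k l : ℕ} (hk : 0 < k) (hl : 0 < l)
    (F : Matrix (Fin (k + l)) (Fin (k + l)) K[X]) (hF : F.det ≠ 0) :
    LinearIndependent K[X] (fun i : Fin k => F (Fin.castAdd l i)) ∧
    LinearIndependent K[X] (fun i : Fin l => F (Fin.natAdd k i)) ∧
    ∀ U : Matrix (Fin (k + l)) (Fin (k + l)) K[X],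
      (∃ c : K, c ≠ 0 ∧ U.det = Polynomial.C c) →
      (F * U).submatrix (Fin.castAdd l) (Fin.natAdd k) = 0 →
      ((F * U).submatrix (Fin.castAdd l) (Fin.castAdd l)).det ≠ 0 ∧
      IsColumnBasis (F.submatrix (Fin.castAdd l) id)
        ((F * U).submatrix (Fin.castAdd l) (Fin.castAdd l)) :=
  top_block_nonsingular_column_basis_general F hF
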